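/- arXiv:2111.15485 — 3 statements merged into one kernel-verified Lean document; each statement's English description precedes it below -/
import Mathlib

section
/- Let φ(x_1,…,x_h) = c_1x_1 + ⋯ + c_hx_h be a linear form with coefficients in a field F, and let V be a vector space over F. For every nonempty subset A of V and every b ∈ V \ A, if A ∪ {b} is a φ-Sidon set, then the sets Φ_J(A, b) for J ranging over all subsets of {1,…,h} are pairwise disjoint. -/
/-- `A ⊆ V` is a Sidon set for the linear form `φ(x₁,…,x_h) = c₁x₁ + ⋯ + c_hx_h`
with coefficients `c` in the field `F`, `V` a vector space over `F`. -/
def IsSidon {F V : Type*} [Field F] [AddCommGroup V] [Module F V] {h : ℕ}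
    (c : Fin h → F) (A : Set V) : Prop :=
  ∀ a a' : Fin h → V, (∀ i, a i ∈ A) → (∀ i, a' i ∈ A) →
    (∑ i, c i • a i) = (∑ i, c i • a' i) → a = a'

/-- The φ-image `φ(A) = {c₁a₁ + ⋯ + c_h a_h : (a₁,…,a_h) ∈ A^h}`. -/
def phiImage {F V : Type*} [Field F] [AddCommGroup V] [Module F V] {h : ℕ}
    (c : Fin h → F) (A : Set V) : Set V :=
  {v | ∃ a : Fin h → V, (∀ i, a i ∈ A) ∧ v = ∑ i, c i • a i}

/-- The image `φ_J(A) = {Σ_{j∈J} c_j a_j : a_j ∈ A for all j ∈ J}` of the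
contraction `φ_J` (with `φ_∅(A) = {0}`). -/
def phiJ {F V : Type*} [Field F] [AddCommGroup V] [Module F V] {h : ℕ}
    (c : Fin h → F) (J : Finset (Fin h)) (A : Set V) : Set V :=
  {v | ∃ a : Fin h → V, (∀ j ∈ J, a j ∈ A) ∧ v = ∑ j ∈ J, c j • a j}

/-- `Φ_J(A, b) = φ_J(A) + s(Jᶜ)·b`, the translate of `φ_J(A)` by `s(Jᶜ)·b`,
where `s(Jᶜ) = Σ_{j∈Jᶜ} c_j`. -/
def PhiJ {F V : Type*} [Field F] [AddCommGroup V] [Module F V] {h : ℕ}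
    (c : Fin h → F) (J : Finset (Fin h)) (A : Set V) (b : V) : Set V :=
  (fun v => v + (∑ j ∈ Jᶜ, c j) • b) '' phiJ c J A

lemma sum_split {F V : Type*} [Field F] [AddCommGroup V] [Module F V] {h : ℕ}
    (c : Fin h → F) (J : Finset (Fin h)) (a : Fin h → V) (b : V) :
    ∑ i, c i • (if i ∈ J then a i else b) =
      (∑ j ∈ J, c j • a j) + (∑ j ∈ Jᶜ, c j) • b := by
  rw [← Finset.sum_add_sum_compl J (fun i => c i • (if i ∈ J then a i else b)),
    Finset.sum_smul]
  congr 1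
  · exact Finset.sum_congr rfl fun i hi => by rw [if_pos hi]
  · exact Finset.sum_congr rfl fun i hi => by
      rw [if_neg (Finset.mem_compl.mp hi)]

/-- If `A ∪ {b}` is a φ-Sidon set (`A` nonempty, `b ∉ A`), then the sets
`Φ_J(A, b)`, for `J` ranging over the subsets of `{1,…,h}`, are pairwise disjoint. -/
theorem statement4 {F V : Type*} [Field F] [AddCommGroup V] [Module F V] {h : ℕ}
    (c : Fin h → F) (A : Set V) (hA : A.Nonempty) (b : V) (hb : b ∉ A)
    (hSidon : IsSidon c (A ∪ {b})) :
    ∀ J₁ J₂ : Finset (Fin h), J₁ ≠ J₂ →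
      Disjoint (PhiJ c J₁ A b) (PhiJ c J₂ A b) := by
  intro J₁ J₂ hne
  rw [Set.disjoint_left]
  rintro v ⟨x, ⟨a, ha, rfl⟩, rfl⟩ ⟨y, ⟨a', ha', rfl⟩, heq⟩
  set f : Fin h → V := fun i => if i ∈ J₁ then a i else b with hf
  set g : Fin h → V := fun i => if i ∈ J₂ then a' i else b with hg
  have hfg : f = g := by
    apply hSidon
    · intro i
      by_cases hi : i ∈ J₁
      · simp only [hf, if_pos hi]; exact Or.inl (ha i hi)
      · simp only [hf, if_neg hi]; exact Or.inr rfl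
    · intro i
      by_cases hi : i ∈ J₂
      · simp only [hg, if_pos hi]; exact Or.inl (ha' i hi)
      · simp only [hg, if_neg hi]; exact Or.inr rfl
    · rw [sum_split, sum_split]
      simpa using heq.symm
  obtain ⟨i, hi⟩ : ∃ i, (i ∈ J₁ ∧ i ∉ J₂) ∨ (i ∈ J₂ ∧ i ∉ J₁) := by
    by_contra hcon
    push_neg at hcon
    exact hne (Finset.ext fun i => by
      have := hcon i
      tauto)
  have := congrFun hfg i
  rcases hi with ⟨h1, h2⟩ | ⟨h1, h2⟩
  · simp only [hf, hg, if_pos h1, if_neg h2] at this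
    exact hb (this ▸ ha i h1)
  · simp only [hf, hg, if_neg h2, if_pos h1] at this
    exact hb (this ▸ ha' i h1)
end

section
/- Let φ(x_1,…,x_h) = c_1x_1 + ⋯ + c_hx_h be a linear form with coefficients in a field F, and let V be a vector space over F. Let A be a nonempty subset of V and b ∈ V \ A. If A is a φ-Sidon set and the sets Φ_J(A, b) for J ranging over all subsets of {1,…,h} are pairwise disjoint, then A ∪ {b} is a φ-Sidon set. -/
/-- If `A` is a φ-Sidon set (`A` nonempty, `b ∉ A`) and the sets `Φ_J(A, b)` for
`J ⊆ {1,…,h}` are pairwise disjoint, then `A ∪ {b}` is a φ-Sidon set. -/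
theorem statement5 {F V : Type*} [Field F] [AddCommGroup V] [Module F V] {h : ℕ}
    (c : Fin h → F) (A : Set V) (hA : A.Nonempty) (b : V) (hb : b ∉ A)
    (hSidon : IsSidon c A)
    (hdisj : ∀ J₁ J₂ : Finset (Fin h), J₁ ≠ J₂ →
      Disjoint (PhiJ c J₁ A b) (PhiJ c J₂ A b)) :
    IsSidon c (A ∪ {b}) := by
    classical
  obtain ⟨a₀, ha₀⟩ := hA
  intro a a' ha ha' hsum
  set J₁ : Finset (Fin h) := Finset.univ.filter (fun i => a i ∈ A) with hJ1
  set J₂ : Finset (Fin h) := Finset.univ.filter (fun i => a' i ∈ A) with hJ2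
  have hmemJ1 : ∀ i, i ∈ J₁ ↔ a i ∈ A := by
    intro i; simp [hJ1]
  have hmemJ2 : ∀ i, i ∈ J₂ ↔ a' i ∈ A := by
    intro i; simp [hJ2]
  have hbJ1 : ∀ i ∉ J₁, a i = b := by
    intro i hi
    rcases ha i with h1 | h1
    · exact absurd ((hmemJ1 i).2 h1) hi
    · exact h1
  have hbJ2 : ∀ i ∉ J₂, a' i = b := by
    intro i hi
    rcases ha' i with h1 | h1
    · exact absurd ((hmemJ2 i).2 h1) hi
    · exact h1
  have hsplit : ∀ (J : Finset (Fin h)) (f : Fin h → V), (∀ i ∉ J, f i = b) →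
      (∑ i, c i • f i) = (∑ i ∈ J, c i • f i) + (∑ j ∈ Jᶜ, c j) • b := by
    intro J f hf
    rw [← Finset.sum_add_sum_compl J, Finset.sum_smul]
    congr 1
    apply Finset.sum_congr rfl
    intro i hi
    rw [hf i (Finset.mem_compl.mp hi)]
  have h1 := hsplit J₁ a hbJ1
  have h2 := hsplit J₂ a' hbJ2
  have hmem1 : (∑ i, c i • a i) ∈ PhiJ c J₁ A b := by
    refine ⟨∑ i ∈ J₁, c i • a i, ⟨a, fun j hj => (hmemJ1 j).1 hj, rfl⟩, h1.symm⟩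
  have hmem2 : (∑ i, c i • a i) ∈ PhiJ c J₂ A b := by
    rw [hsum]
    exact ⟨∑ i ∈ J₂, c i • a' i, ⟨a', fun j hj => (hmemJ2 j).1 hj, rfl⟩, h2.symm⟩
  have hJeq : J₁ = J₂ := by
    by_contra hne
    exact (hdisj J₁ J₂ hne).ne_of_mem hmem1 hmem2 rfl
  -- extend to full tuples in A
  set ta : Fin h → V := fun i => if i ∈ J₁ then a i else a₀ with hta
  set ta' : Fin h → V := fun i => if i ∈ J₁ then a' i else a₀ with hta'
  have htaA : ∀ i, ta i ∈ A := by
    intro i; by_cases hi : i ∈ J₁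
    · simpa [hta, hi] using (hmemJ1 i).1 hi
    · simpa [hta, hi] using ha₀
  have hta'A : ∀ i, ta' i ∈ A := by
    intro i; by_cases hi : i ∈ J₁
    · simpa [hta', hi] using (hmemJ2 i).1 (hJeq ▸ hi)
    · simpa [hta', hi] using ha₀
  have hJsum : (∑ i ∈ J₁, c i • a i) = ∑ i ∈ J₁, c i • a' i := by
    rw [hJeq] at h1 ⊢
    exact add_right_cancel (h1.symm.trans (hsum.trans h2))
  have htasum : (∑ i, c i • ta i) = ∑ i, c i • ta' i := by
    rw [← Finset.sum_add_sum_compl J₁ (fun i => c i • ta i),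
        ← Finset.sum_add_sum_compl J₁ (fun i => c i • ta' i)]
    congr 1
    · calc (∑ i ∈ J₁, c i • ta i) = ∑ i ∈ J₁, c i • a i := by
            apply Finset.sum_congr rfl; intro i hi; simp [hta, hi]
        _ = ∑ i ∈ J₁, c i • a' i := hJsum
        _ = ∑ i ∈ J₁, c i • ta' i := by
            apply Finset.sum_congr rfl; intro i hi; simp [hta', hi]
    · apply Finset.sum_congr rfl
      intro i hi
      have hi' := Finset.mem_compl.mp hi
      simp [hta, hta', hi']
  have hteq : ta = ta' := hSidon ta ta' htaA hta'A htasum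
  funext i
  by_cases hi : i ∈ J₁
  · have := congrFun hteq i
    simpa [hta, hta', hi] using this
  · rw [hbJ1 i hi, hbJ2 i (hJeq ▸ hi)]
end

section
/- Let φ(x_1,…,x_h) = c_1x_1 + ⋯ + c_hx_h be a linear form with coefficients in a field F, and let V be a vector space over F. Suppose there exist disjoint subsets I_1 and I_2 of {1,…,h}, not both empty, such that Σ_{i∈I_1} c_i = Σ_{i∈I_2} c_i. Then no subset A of V containing at least two distinct elements is a φ-Sidon set. -/
/-- If there are disjoint subsets `I₁, I₂` of `{1,…,h}`, not both empty, with equal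
subset sums, then no subset of `V` with at least two elements is a φ-Sidon set. -/
theorem statement7 {F V : Type*} [Field F] [AddCommGroup V] [Module F V] {h : ℕ}
    (c : Fin h → F)
    (hI : ∃ I₁ I₂ : Finset (Fin h), Disjoint I₁ I₂ ∧ (I₁.Nonempty ∨ I₂.Nonempty) ∧
      ∑ i ∈ I₁, c i = ∑ i ∈ I₂, c i) :
    ∀ A : Set V, (∃ x ∈ A, ∃ y ∈ A, x ≠ y) → ¬ IsSidon c A := by
  obtain ⟨I₁, I₂, hdisj, hne, hsum⟩ := hI
  rintro A ⟨x, hx, y, hy, hxy⟩ hS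
  have key : ∀ I : Finset (Fin h),
      ∑ i, c i • (if i ∈ I then x else y)
        = (∑ i ∈ I, c i) • (x - y) + (∑ i, c i) • y := by
    intro I
    have : ∀ i : Fin h, c i • (if i ∈ I then x else y)
        = (if i ∈ I then c i • (x - y) else 0) + c i • y := by
      intro i
      by_cases hi : i ∈ I <;> simp [hi, smul_sub]
    simp only [this, Finset.sum_add_distrib, Finset.sum_ite_mem,
      Finset.univ_inter, Finset.sum_smul]
  have heq : ∑ i, c i • (if i ∈ I₁ then x else y)
      = ∑ i, c i • (if i ∈ I₂ then x else y) := by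
    rw [key, key, hsum]
  have := hS (fun i => if i ∈ I₁ then x else y) (fun i => if i ∈ I₂ then x else y)
    (fun i => by by_cases hi : i ∈ I₁ <;> simp [hi, hx, hy])
    (fun i => by by_cases hi : i ∈ I₂ <;> simp [hi, hx, hy]) heq
  rcases hne with ⟨i, hi⟩ | ⟨i, hi⟩
  · have hi2 : i ∉ I₂ := Finset.disjoint_left.mp hdisj hi
    have := congrFun this i
    simp [hi, hi2] at this
    exact hxy this
  · have hi1 : i ∉ I₁ := Finset.disjoint_right.mp hdisj hi
    have := congrFun this i
    simp [hi, hi1] at this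
    exact hxy this.symm
end
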